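/- arXiv:2109.01798 — 4 statements merged into one kernel-verified Lean document; each statement's English description precedes it below -/
import Mathlib

section
/- For an integer k ≥ 1, the congruence 18(k)_3 ≡ 2 (mod 208) holds if and only if k ≡ 29 (mod 52). -/
/-!
Modulo 208, the 52 terms of one period sum to zero: `18 * ∑_{i<52} 27^i ≡ 0`. Hence
`18 * ∑_{i<k} 27^i` modulo 208 depends only on `k % 52`, and checking the 52 residues
shows that it equals 2 exactly for the residue 29.
-/

open Finset

theorem mul_geom_sum_eq_mul_geom_sum_mod {R : Type*} [CommSemiring R] {c x : R} {p : ℕ}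
    (hp : c * ∑ i ∈ range p, x ^ i = 0) (k : ℕ) :
    c * ∑ i ∈ range k, x ^ i = c * ∑ i ∈ range (k % p), x ^ i := by
  conv_lhs => rw [← Nat.mod_add_div k p]
  induction k / p with
  | zero => simp
  | succ n ih =>
    rw [Nat.mul_succ, ← add_assoc, sum_range_add, mul_add, ih]
    simp_rw [pow_add, ← mul_sum, mul_left_comm c, hp, mul_zero, add_zero]

theorem concat18_base3_mod208_general (k : ℕ) :
    18 * ∑ i ∈ Finset.range k, 27 ^ i ≡ 2 [MOD 208] ↔ k ≡ 29 [MOD 52] := by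
  have hperiod : 18 * ∑ i ∈ range 52, (27 : ZMod 208) ^ i = 0 := by decide
  have hresidues : ∀ r < 52, 18 * ∑ i ∈ range r, (27 : ZMod 208) ^ i = 2 ↔ r = 29 := by
    decide
  rw [← ZMod.natCast_eq_natCast_iff]
  push_cast
  rw [mul_geom_sum_eq_mul_geom_sum_mod hperiod, hresidues _ (Nat.mod_lt _ (by norm_num))]
  rfl

/-- 18(k)₃ ≡ 2 (mod 208) if and only if k ≡ 29 (mod 52). -/
theorem concat18_base3_mod208 (k : ℕ) (hk : 1 ≤ k) :
    18 * ∑ i ∈ Finset.range k, 27 ^ i ≡ 2 [MOD 208] ↔ k ≡ 29 [MOD 52] :=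
  concat18_base3_mod208_general k
end

section
/- If ρ is a decimal palindrome with digits in {0,1}, then the decimal reversal of 18ρ equals 81ρ. -/
/-- The decimal digit reversal of a natural number. -/
def rev (n : ℕ) : ℕ := Nat.ofDigits 10 ((Nat.digits 10 n).reverse)

lemma ofDigits_zipWith_add (X Y : List ℕ) (h : X.length = Y.length) :
    Nat.ofDigits 10 (List.zipWith (· + ·) X Y)
      = Nat.ofDigits 10 X + Nat.ofDigits 10 Y := by
  induction X generalizing Y with
  | nil =>
    cases Y with
    | nil => simp
    | cons b T => simp at h
  | cons a T ih =>
    cases Y with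
    | nil => simp at h
    | cons b S =>
      simp only [List.length_cons, Nat.succ.injEq] at h
      simp only [List.zipWith_cons_cons, Nat.ofDigits_cons, ih S h]
      ring

lemma ofDigits_map_mul (c : ℕ) (L : List ℕ) :
    Nat.ofDigits 10 (L.map (fun d => c * d)) = c * Nat.ofDigits 10 L := by
  induction L with
  | nil => simp
  | cons a T ih =>
    simp only [List.map_cons, Nat.ofDigits_cons, ih]
    ring

lemma zipWith_add_lt (X Y : List ℕ) (hX : ∀ x ∈ X, x ≤ 8) (hY : ∀ y ∈ Y, y ≤ 1) :
    ∀ z ∈ List.zipWith (· + ·) X Y, z < 10 := by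
  induction X generalizing Y with
  | nil => simp
  | cons a T ih =>
    cases Y with
    | nil => simp
    | cons b S =>
      intro z hz
      simp only [List.zipWith_cons_cons, List.mem_cons] at hz
      rcases hz with rfl | hz
      · have := hX a (by simp)
        have := hY b (by simp)
        omega
      · exact ih S (fun x hx => hX x (by simp [hx])) (fun y hy => hY y (by simp [hy])) z hz

/-- If ρ is a decimal palindrome with digits in {0,1}, then the decimal
reversal of 18ρ equals 81ρ. -/
theorem rev_18_mul (ρ : ℕ) (hρ : 0 < ρ)
    (hpal : ρ = rev ρ) (hdig : ∀ d ∈ Nat.digits 10 ρ, d = 0 ∨ d = 1) :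
    rev (18 * ρ) = 81 * ρ := by
  have hρ0 : ρ ≠ 0 := hρ.ne'
  obtain ⟨L, hL⟩ : ∃ L, Nat.digits 10 ρ = L := ⟨_, rfl⟩
  rw [hL] at hdig
  have hofL : Nat.ofDigits 10 L = ρ := by rw [← hL]; exact Nat.ofDigits_digits 10 ρ
  have hLne : L ≠ [] := hL ▸ Nat.digits_ne_nil_iff_ne_zero.mpr hρ0
  have hLlt : ∀ d ∈ L, d < 10 := fun d hd =>
    Nat.digits_lt_base (by norm_num) (hL ▸ hd)
  obtain ⟨a, T, hT⟩ := List.exists_cons_of_ne_nil hLne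
  subst hT
  have hofL' : a + 10 * Nat.ofDigits 10 T = ρ := by
    rw [← hofL, Nat.ofDigits_cons]
  have hrevval : rev ρ = Nat.ofDigits 10 (a :: T).reverse := by rw [rev, hL]
  -- head of L is nonzero (else rev ρ < ρ)
  have ha : a ≠ 0 := by
    intro h0
    subst h0
    have h2 : rev ρ < 10 ^ T.length := by
      rw [hrevval]
      have h1 : Nat.ofDigits 10 ((0 : ℕ) :: T).reverse = Nat.ofDigits 10 T.reverse := by
        simp [Nat.ofDigits_append]
      rw [h1]
      have := Nat.ofDigits_lt_base_pow_length (b := 10) (l := T.reverse)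
        (by norm_num) (fun x hx => hLlt x (List.mem_cons_of_mem _ (List.mem_reverse.mp hx)))
      simpa using this
    have h3 : 10 ^ T.length ≤ ρ := by
      have h4 := Nat.base_pow_length_digits_le 10 ρ (by norm_num) hρ0
      rw [hL] at h4
      simp only [List.length_cons, pow_succ] at h4
      have h4' : 10 * 10 ^ T.length ≤ 10 * ρ := by linarith
      exact Nat.le_of_mul_le_mul_left h4' (by norm_num)
    omega
  -- digits of rev ρ are L.reverse, hence L is a palindrome
  have hrevdig : Nat.digits 10 (rev ρ) = (a :: T).reverse := by
    rw [hrevval]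
    refine Nat.digits_ofDigits 10 (by norm_num) (a :: T).reverse
      (fun x hx => hLlt x (List.mem_reverse.mp hx)) (fun h => ?_)
    rw [List.getLast_reverse]
    simpa using ha
  have hLpal : (a :: T).reverse = a :: T := by
    conv_rhs => rw [← hL, hpal, hrevdig]
  -- the digit list of 18ρ
  set A : List ℕ := (a :: T).map (fun d => 8 * d) ++ [0] with hA
  set B : List ℕ := 0 :: (a :: T) with hB
  have hlen : A.length = B.length := by simp [hA, hB]
  set E : List ℕ := List.zipWith (· + ·) A B with hE
  have hEval : Nat.ofDigits 10 E = 18 * ρ := by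
    rw [hE, ofDigits_zipWith_add A B hlen, hA, hB, Nat.ofDigits_append, ofDigits_map_mul]
    simp only [Nat.ofDigits_cons, Nat.ofDigits_nil, Nat.cast_id, mul_zero, add_zero, zero_add]
    omega
  have hArev : A.reverse = 0 :: (a :: T).map (fun d => 8 * d) := by
    rw [hA, List.reverse_append, ← List.map_reverse, hLpal]
    simp
  have hBrev : B.reverse = (a :: T) ++ [0] := by
    rw [hB, List.reverse_cons (a := 0), hLpal]
  have hErev : E.reverse
      = List.zipWith (· + ·) (0 :: (a :: T).map (fun d => 8 * d)) ((a :: T) ++ [0]) := by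
    rw [hE, List.reverse_zipWith hlen, hArev, hBrev]
  have hErevval : Nat.ofDigits 10 E.reverse = 81 * ρ := by
    rw [hErev, ofDigits_zipWith_add _ _ (by simp)]
    simp only [Nat.ofDigits_append, Nat.ofDigits_cons, Nat.ofDigits_nil, ofDigits_map_mul,
      Nat.cast_id, mul_zero, add_zero, zero_add]
    omega
  have hEne : E ≠ [] := by
    intro h
    have := congrArg List.length h
    rw [hE, List.length_zipWith] at this
    simp [hA, hB] at this
  have hElt : ∀ x ∈ E, x < 10 := by
    refine zipWith_add_lt A B ?_ ?_
    · intro x hx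
      rw [hA] at hx
      rcases List.mem_append.mp hx with h | h
      · obtain ⟨d, hd, rfl⟩ := List.mem_map.mp h
        rcases hdig d hd with rfl | rfl <;> simp
      · simp at h; omega
    · intro y hy
      rw [hB] at hy
      rcases List.mem_cons.mp hy with rfl | h
      · omega
      · rcases hdig y h with rfl | rfl <;> omega
  have hEgetLast? : E.getLast? = some a := by
    rw [← List.head?_reverse, hErev]
    simp
  have hEgetLast : ∀ (h : E ≠ []), E.getLast h ≠ 0 := by
    intro h
    rw [List.getLast?_eq_getLast h] at hEgetLast?
    simp only [Option.some_inj] at hEgetLast?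
    rw [hEgetLast?]
    exact ha
  have hdigE : Nat.digits 10 (18 * ρ) = E := by
    rw [← hEval]
    exact Nat.digits_ofDigits 10 (by norm_num) E hElt hEgetLast
  rw [rev, hdigE, hErevval]
end

section
/- For every k ≥ 1, the number 18(k)_{10} = 1818...18 (k copies of 18 concatenated in base 10) is a v-palindrome. -/
/-- The additive arithmetic function v, with v(p) = p and v(p^e) = p + e for e ≥ 2. -/
def v (n : ℕ) : ℕ := n.factorization.sum (fun p e => p + if e = 1 then 0 else e)

/-- n is a v-palindrome: 10 ∤ n, n ≠ r(n), and v(n) = v(r(n)). -/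
def IsVPalindrome (n : ℕ) : Prop := ¬ (10 ∣ n) ∧ n ≠ rev n ∧ v n = v (rev n)

namespace VPal

def S (k : ℕ) : ℕ := ∑ i ∈ Finset.range k, 100 ^ i

lemma S_succ (k : ℕ) : S (k + 1) = 1 + 100 * S k := by
  rw [S, Finset.sum_range_succ']
  simp [S, Finset.mul_sum, pow_succ, add_comm, mul_comm]

lemma S_pos (k : ℕ) (hk : 1 ≤ k) : 0 < S k := by
  obtain ⟨j, rfl⟩ := Nat.exists_eq_add_of_le hk
  rw [add_comm, S_succ]; omega

def dig : ℕ → List ℕ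
  | 0 => []
  | k + 1 => 8 :: 1 :: dig k

lemma dig_length (k : ℕ) : (dig k).length = 2 * k := by
  induction k with
  | zero => rfl
  | succ k ih => simp [dig, ih]; ring

lemma digits_18S (k : ℕ) : Nat.digits 10 (18 * S k) = dig k := by
  induction k with
  | zero => simp [S, dig]
  | succ k ih =>
    have h : 18 * S (k + 1) = 18 + 100 * (18 * S k) := by rw [S_succ]; ring
    rw [h, Nat.digits_def' (by norm_num : (1:ℕ) < 10) (by positivity)]
    have h1 : (18 + 100 * (18 * S k)) % 10 = 8 := by omega
    have h2 : (18 + 100 * (18 * S k)) / 10 = 1 + 10 * (18 * S k) := by omega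
    rw [h1, h2, Nat.digits_def' (by norm_num : (1:ℕ) < 10) (by positivity)]
    have h3 : (1 + 10 * (18 * S k)) % 10 = 1 := by omega
    have h4 : (1 + 10 * (18 * S k)) / 10 = 18 * S k := by omega
    rw [h3, h4, ih, dig]

lemma ofDigits_dig_rev (k : ℕ) : Nat.ofDigits 10 ((dig k).reverse) = 81 * S k := by
  induction k with
  | zero => simp [S, dig, Nat.ofDigits]
  | succ k ih =>
    have h : (dig (k + 1)).reverse = (dig k).reverse ++ [1, 8] := by simp [dig]
    rw [h, Nat.ofDigits_append, ih]
    have hl : ((dig k).reverse).length = 2 * k := by simp [dig_length]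
    rw [hl]
    have : Nat.ofDigits 10 [1, 8] = 81 := by simp [Nat.ofDigits]
    have hss : S (k + 1) = S k + 100 ^ k := Finset.sum_range_succ _ _
    rw [this, hss]
    have : (10 : ℕ) ^ (2 * k) = 100 ^ k := by rw [pow_mul]; norm_num
    rw [this]; ring

lemma rev_18S (k : ℕ) : rev (18 * S k) = 81 * S k := by
  rw [rev, digits_18S, ofDigits_dig_rev]

/-- v is additive on coprime products. -/
lemma v_mul {a b : ℕ} (ha : a ≠ 0) (hb : b ≠ 0) (hab : Nat.Coprime a b) :
    v (a * b) = v a + v b := by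
  have hfab := Nat.factorization_mul ha hb
  have hdisj : Disjoint a.primeFactors b.primeFactors := hab.disjoint_primeFactors
  have key : ∀ n : ℕ, v n = ∑ p ∈ n.primeFactors,
      (p + if n.factorization p = 1 then 0 else n.factorization p) := by
    intro n
    rw [v, Finsupp.sum, Nat.support_factorization]
  rw [key, key, key, Nat.primeFactors_mul ha hb, Finset.sum_union hdisj]
  congr 1
  · apply Finset.sum_congr rfl
    intro p hp
    have hbp : b.factorization p = 0 := by
      rw [← Nat.support_factorization] at hdisj
      have : p ∉ b.factorization.support := by
        rw [Nat.support_factorization] at *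
        exact fun h => (Finset.disjoint_left.mp hdisj hp) h
      simpa using Finsupp.notMem_support_iff.mp this
    rw [hfab]; simp [hbp]
  · apply Finset.sum_congr rfl
    intro p hp
    have hap : a.factorization p = 0 := by
      have : p ∉ a.primeFactors := fun h => (Finset.disjoint_left.mp hdisj h) hp
      rw [← Nat.support_factorization] at this
      simpa using Finsupp.notMem_support_iff.mp this
    rw [hfab]; simp [hap]

lemma v_prime_pow {p e : ℕ} (hp : p.Prime) (he : 2 ≤ e) : v (p ^ e) = p + e := by
  rw [v, hp.factorization_pow, Finsupp.sum,
    Finsupp.support_single_ne_zero p (by omega : e ≠ 0), Finset.sum_singleton,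
    Finsupp.single_eq_same]
  have : e ≠ 1 := by omega
  simp [this]

lemma v_two : v 2 = 2 := by
  rw [v, Nat.Prime.factorization Nat.prime_two, Finsupp.sum,
    Finsupp.support_single_ne_zero 2 one_ne_zero, Finset.sum_singleton,
    Finsupp.single_eq_same]
  simp

end VPal

/-- For every k ≥ 1, the number 1818...18 (k copies of 18) is a v-palindrome. -/
theorem vpalindrome_repeated_18 (k : ℕ) (hk : 1 ≤ k) :
    IsVPalindrome (18 * ∑ i ∈ Finset.range k, 100 ^ i) := by
  have hS : (∑ i ∈ Finset.range k, 100 ^ i) = VPal.S k := rfl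
  rw [hS]
  have hSpos := VPal.S_pos k hk
  have hSne : VPal.S k ≠ 0 := hSpos.ne'
  -- S is odd
  obtain ⟨j, rfl⟩ := Nat.exists_eq_add_of_le hk
  set K := 1 + j with hK
  have hSform : VPal.S K = 1 + 100 * VPal.S j := by
    rw [hK, add_comm 1 j]; exact VPal.S_succ j
  have hSodd : ¬ 2 ∣ VPal.S K := by rw [hSform]; omega
  -- decompose S = 3^a * m
  set a := (VPal.S K).factorization 3 with ha
  set m := VPal.S K / 3 ^ a with hm
  have hSam : 3 ^ a * m = VPal.S K := Nat.ordProj_mul_ordCompl_eq_self _ 3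
  have hm3 : ¬ 3 ∣ m := Nat.not_dvd_ordCompl Nat.prime_three hSne
  have hmne : m ≠ 0 := by
    intro h; rw [h, mul_zero] at hSam; exact hSne hSam.symm
  have hmodd : ¬ 2 ∣ m := by
    intro ⟨c, hc⟩
    apply hSodd
    rw [← hSam, hc]; exact ⟨3 ^ a * c, by ring⟩
  constructor
  · -- 10 ∤ n
    intro ⟨c, hc⟩
    rw [hSform] at hc
    omega
  constructor
  · -- n ≠ rev n
    rw [VPal.rev_18S]
    omega
  · -- v n = v (rev n)
    rw [VPal.rev_18S]
    have h18 : 18 * VPal.S K = 2 * (3 ^ (a + 2) * m) := by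
      rw [← hSam]; ring
    have h81 : 81 * VPal.S K = 3 ^ (a + 4) * m := by
      rw [← hSam]; ring
    have hcop3m : Nat.Coprime 3 m := (Nat.Prime.coprime_iff_not_dvd Nat.prime_three).mpr hm3
    have hcop2 : ∀ e : ℕ, Nat.Coprime 2 (3 ^ e * m) := by
      intro e
      apply (Nat.Prime.coprime_iff_not_dvd Nat.prime_two).mpr
      intro ⟨c, hc⟩
      have h3odd : ¬ 2 ∣ 3 ^ e := by
        intro h
        have := Nat.Prime.dvd_of_dvd_pow (p := 2) (n := e) (m := 3) Nat.prime_two h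
        omega
      rcases (Nat.Prime.dvd_mul Nat.prime_two).mp ⟨c, hc⟩ with h | h
      · exact h3odd h
      · exact hmodd h
    rw [h18, h81]
    rw [VPal.v_mul (by norm_num) (by positivity) (hcop2 (a + 2)),
        VPal.v_mul (by positivity) hmne (Nat.Coprime.pow_left _ hcop3m),
        VPal.v_mul (by positivity) hmne (Nat.Coprime.pow_left _ hcop3m),
        VPal.v_two, VPal.v_prime_pow Nat.prime_three (by omega),
        VPal.v_prime_pow Nat.prime_three (by omega)]
    omega
end

section
/- For every j ≥ 1, the number 18·(10^{j+1} + 1), i.e., 1 8 0...0 1 8 with j−1 zeros in the middle (so 1818, 18018, 180018, ...), is a v-palindrome. -/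
lemma finsupp_sum_add_disjoint (f g : ℕ →₀ ℕ) (F : ℕ → ℕ → ℕ)
    (h : Disjoint f.support g.support) :
    (f + g).sum F = f.sum F + g.sum F := by
  classical
  rw [Finsupp.sum, Finsupp.sum, Finsupp.sum, Finsupp.support_add_eq h,
    Finset.sum_union h]
  congr 1
  · refine Finset.sum_congr rfl fun p hp => ?_
    have hg : g p = 0 := Finsupp.notMem_support_iff.mp (Finset.disjoint_left.mp h hp)
    simp [hg]
  · refine Finset.sum_congr rfl fun p hp => ?_
    have hf : f p = 0 := Finsupp.notMem_support_iff.mp (Finset.disjoint_right.mp h hp)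
    simp [hf]

lemma v_mul_coprime {m n : ℕ} (hm : m ≠ 0) (hn : n ≠ 0) (h : Nat.Coprime m n) :
    v (m * n) = v m + v n := by
  unfold v
  rw [Nat.factorization_mul hm hn]
  apply finsupp_sum_add_disjoint
  rw [Nat.support_factorization, Nat.support_factorization]
  exact Nat.Coprime.disjoint_primeFactors h

lemma v_prime_pow {p e : ℕ} (hp : p.Prime) (he : e ≠ 0) :
    v (p ^ e) = p + if e = 1 then 0 else e := by
  unfold v
  rw [hp.factorization_pow, Finsupp.sum, Finsupp.support_single_ne_zero _ he]
  simp

lemma v_two : v 2 = 2 := by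
  have := v_prime_pow (p := 2) (e := 1) Nat.prime_two one_ne_zero
  simpa using this

lemma v_nine : v 9 = 5 := by
  have := v_prime_pow (p := 3) (e := 2) Nat.prime_three two_ne_zero
  norm_num at this
  exact this

lemma v_81 : v 81 = 7 := by
  have := v_prime_pow (p := 3) (e := 4) Nat.prime_three four_ne_zero
  norm_num at this
  exact this

lemma v_18 : v 18 = 7 := by
  have h : (18 : ℕ) = 2 * 9 := by norm_num
  rw [h, v_mul_coprime (by norm_num) (by norm_num) (by decide), v_two, v_nine]

lemma rho_coprime (j : ℕ) : Nat.Coprime 18 (10 ^ (j + 1) + 1) ∧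
    Nat.Coprime 81 (10 ^ (j + 1) + 1) := by
  set ρ := 10 ^ (j + 1) + 1 with hρ
  have h2 : ρ % 2 = 1 := by
    have : 10 ^ (j + 1) % 2 = 0 := by
      rw [Nat.pow_mod]; simp
    omega
  have h3 : ρ % 3 = 2 := by
    have : 10 ^ (j + 1) % 3 = 1 := by
      rw [Nat.pow_mod]; norm_num
    omega
  have c2 : Nat.Coprime 2 ρ := by
    rw [Nat.Prime.coprime_iff_not_dvd Nat.prime_two]; omega
  have c3 : Nat.Coprime 3 ρ := by
    rw [Nat.Prime.coprime_iff_not_dvd Nat.prime_three]; omega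
  constructor
  · have : (18 : ℕ) = 2 * (3 * 3) := by norm_num
    rw [this]
    exact Nat.Coprime.mul c2 (Nat.Coprime.mul c3 c3)
  · have : (81 : ℕ) = 3 * (3 * (3 * 3)) := by norm_num
    rw [this]
    exact Nat.Coprime.mul c3 (Nat.Coprime.mul c3 (Nat.Coprime.mul c3 c3))

lemma ofDigits_replicate_zero (b k : ℕ) : Nat.ofDigits b (List.replicate k 0) = 0 := by
  induction k with
  | zero => simp
  | succ k ih => simp [List.replicate_succ, Nat.ofDigits_cons, ih]

lemma digits_18 : Nat.digits 10 18 = [8, 1] := by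
  rw [Nat.digits_def' (by norm_num : (1:ℕ) < 10) (by norm_num)]
  norm_num

lemma rev_eq (j : ℕ) (hj : 1 ≤ j) :
    rev (18 * (10 ^ (j + 1) + 1)) = 81 * (10 ^ (j + 1) + 1) := by
  have key : Nat.digits 10 (18 * (10 ^ (j + 1) + 1)) =
      [8, 1] ++ List.replicate (j - 1) 0 ++ [8, 1] := by
    have h := Nat.digits_append_zeroes_append_digits (b := 10) (k := j - 1)
      (m := 18) (n := 18) (by norm_num) (by norm_num)
    rw [digits_18] at h
    have hlen : ([8, 1] : List ℕ).length = 2 := rfl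
    rw [hlen] at h
    have harg : 18 + 10 ^ (2 + (j - 1)) * 18 = 18 * (10 ^ (j + 1) + 1) := by
      have : 2 + (j - 1) = j + 1 := by omega
      rw [this]; ring
    rw [harg] at h
    exact h.symm
  unfold rev
  rw [key]
  have hrev : (([8, 1] : List ℕ) ++ List.replicate (j - 1) 0 ++ [8, 1]).reverse =
      [1, 8] ++ List.replicate (j - 1) 0 ++ [1, 8] := by
    simp [List.reverse_append, List.reverse_replicate]
  rw [hrev]
  rw [Nat.ofDigits_append, Nat.ofDigits_append]
  simp only [ofDigits_replicate_zero, List.length_replicate, List.length_cons,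
    List.length_nil]
  have h1 : Nat.ofDigits 10 ([1, 8] : List ℕ) = 81 := by decide
  rw [h1]
  have hl : (([1, 8] : List ℕ) ++ List.replicate (j - 1) 0).length = j + 1 := by
    simp; omega
  rw [hl]
  push_cast
  ring

/-- For every j ≥ 1, the number 18·(10^{j+1} + 1) (i.e. 1818, 18018, 180018, ...)
is a v-palindrome. -/
theorem vpalindrome_18_spread (j : ℕ) (hj : 1 ≤ j) :
    IsVPalindrome (18 * (10 ^ (j + 1) + 1)) := by
  set ρ := 10 ^ (j + 1) + 1 with hρ
  have hρpos : 0 < ρ := by positivity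
  have hrev : rev (18 * ρ) = 81 * ρ := rev_eq j hj
  obtain ⟨c18, c81⟩ := rho_coprime j
  refine ⟨?_, ?_, ?_⟩
  · intro hdvd
    obtain ⟨t, ht⟩ : (10 : ℕ) ∣ 10 ^ (j + 1) := dvd_pow_self 10 (by omega)
    rw [hρ, ht] at hdvd
    omega
  · rw [hrev]
    intro h
    have := Nat.eq_of_mul_eq_mul_right hρpos h
    omega
  · rw [hrev, v_mul_coprime (by norm_num) hρpos.ne' c18,
      v_mul_coprime (by norm_num) hρpos.ne' c81, v_18, v_81]
end
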